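/- Let X : [a,b] → ℝ^d be a piecewise C¹ path and suppose there exist indices p, q, s ∈ {1,…,d} such that the projection t ↦ (X_p(t), X_q(t), X_s(t)) is Legendrian, i.e., Ẋ_p(t)·X_s(t) = Ẋ_q(t) wherever differentiable. Then ⟨σ(X), sp·w⟩ − ⟨σ(X), q·w⟩ + X_s(a)·⟨σ(X), p·w⟩ = 0 for every word w over {1,…,d}. -/

import Mathlib

noncomputable def sigAux {d : ℕ} (X : ℝ → Fin d → ℝ) (a : ℝ) : List (Fin d) → ℝ → ℝ
  | [] => fun _ => 1
  | i :: w => fun t => ∫ s in a..t, sigAux X a w s * deriv (fun u => X u i) s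

/-- `sig X a w t` is the signature coefficient `⟨σ(X|[a,t]), w⟩`: the iterated integral
of the derivatives of the coordinates of `X` indexed by the word `w` (reading order,
first letter innermost). -/
noncomputable def sig {d : ℕ} (X : ℝ → Fin d → ℝ) (a : ℝ) (w : List (Fin d)) (t : ℝ) : ℝ :=
  sigAux X a w.reverse t

/-- A continuous path, piecewise of class `C¹` on `[a,b]`. -/
def PiecewiseC1 {d : ℕ} (X : ℝ → Fin d → ℝ) (a b : ℝ) : Prop :=
  ContinuousOn X (Set.Icc a b) ∧
  ∃ (n : ℕ) (t : Fin (n + 1) → ℝ), t 0 = a ∧ t (Fin.last n) = b ∧ StrictMono t ∧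
    ∀ i : Fin n, ContDiffOn ℝ 1 X (Set.Icc (t i.castSucc) (t i.succ))

/-!
Read from the innermost letter, `⟨σ(X), sp·w⟩`, `⟨σ(X), q·w⟩` and `⟨σ(X), p·w⟩` arise from the
functions `t ↦ ⟨σ(X|[a,t]), sp⟩`, `⟨σ(X|[a,t]), q⟩`, `⟨σ(X|[a,t]), p⟩` by the same iterated
integrations against the letters of `w`. These integrations are linear, so it suffices to treat the
empty word. There, by the fundamental theorem of calculus and the Legendrian condition (valid off
the finitely many break points),
`⟨σ, sp⟩(t) = ∫ (X_s − X_s(a)) dX_p = ∫ dX_q − X_s(a) ∫ dX_p = ⟨σ, q⟩(t) − X_s(a) ⟨σ, p⟩(t)`.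
-/

open MeasureTheory Set intervalIntegral

theorem Fin.exists_mem_Ioc_castSucc_succ {α : Type*} [LinearOrder α] {n : ℕ}
    {t : Fin (n + 1) → α} {u : α} (hu : u ∈ Ioc (t 0) (t (Fin.last n))) :
    ∃ k : Fin n, u ∈ Ioc (t k.castSucc) (t k.succ) := by
  suffices ∀ j : Fin (n + 1), u ∈ Ioc (t 0) (t j) → ∃ k : Fin n, u ∈ Ioc (t k.castSucc) (t k.succ)
    from this _ hu
  intro j
  induction j using Fin.induction with
  | zero => exact fun h => (h.1.not_ge h.2).elim
  | succ k ih =>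
    intro h
    by_cases hk : u ≤ t k.castSucc
    · exact ih ⟨h.1, hk⟩
    · exact ⟨k, not_le.mp hk, h.2⟩

theorem ContDiffOn.intervalIntegrable_deriv {E : Type*} [NormedAddCommGroup E]
    [NormedSpace ℝ E] {f : ℝ → E} {c d : ℝ} (hcd : c < d)
    (hf : ContDiffOn ℝ 1 f (Icc c d)) : IntervalIntegrable (deriv f) volume c d := by
  have hcont : ContinuousOn (derivWithin f (Icc c d)) (uIcc c d) := by
    rw [uIcc_of_le hcd.le]
    exact hf.continuousOn_derivWithin (uniqueDiffOn_Icc hcd) le_rfl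
  refine hcont.intervalIntegrable.congr_uIoo fun x hx => ?_
  rw [uIoo_of_le hcd.le] at hx
  exact derivWithin_of_mem_nhds (Icc_mem_nhds hx.1 hx.2)

namespace PiecewiseC1

variable {d : ℕ} {X : ℝ → Fin d → ℝ} {a b t : ℝ}

theorem left_le_right (hX : PiecewiseC1 X a b) : a ≤ b := by
  obtain ⟨-, n, τ, h0, hlast, hmono, -⟩ := hX
  exact h0 ▸ hlast ▸ hmono.monotone (Fin.zero_le _)

theorem exists_finite_differentiableAt (hX : PiecewiseC1 X a b) :
    ∃ S : Set ℝ, S.Finite ∧ ∀ u ∈ Ioc a b \ S, DifferentiableAt ℝ X u := by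
  obtain ⟨-, n, τ, h0, hlast, -, hC⟩ := hX
  refine ⟨range τ, finite_range τ, fun u ⟨hu, hS⟩ => ?_⟩
  obtain ⟨k, hk⟩ := Fin.exists_mem_Ioc_castSucc_succ (t := τ) (h0 ▸ hlast ▸ hu)
  have hlt : u < τ k.succ := hk.2.lt_of_ne fun h => hS ⟨_, h.symm⟩
  exact ((hC k).differentiableOn one_ne_zero).differentiableAt (Icc_mem_nhds hk.1 hlt)

theorem intervalIntegrable_deriv (hX : PiecewiseC1 X a b) (i : Fin d) (ht : t ∈ Icc a b) :
    IntervalIntegrable (deriv fun u => X u i) volume a t := by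
  have hab : IntervalIntegrable (deriv fun u => X u i) volume a b := by
    obtain ⟨-, n, τ, h0, hlast, hmono, hC⟩ := hX
    suffices ∀ j : Fin (n + 1), IntervalIntegrable (deriv fun u => X u i) volume (τ 0) (τ j)
      from h0 ▸ hlast ▸ this _
    intro j
    induction j using Fin.induction with
    | zero => exact .refl
    | succ k ih =>
      exact ih.trans ((contDiffOn_pi.mp (hC k) i).intervalIntegrable_deriv
        (hmono k.castSucc_lt_succ))
  refine hab.mono_set ?_
  rw [uIcc_of_le ht.1, uIcc_of_le (ht.1.trans ht.2)]
  exact Icc_subset_Icc_right ht.2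

theorem integral_deriv_eq_sub (hX : PiecewiseC1 X a b) (i : Fin d) (ht : t ∈ Icc a b) :
    ∫ u in a..t, deriv (fun v => X v i) u = X t i - X a i := by
  obtain ⟨S, hS, hdiff⟩ := hX.exists_finite_differentiableAt
  refine integral_eq_of_hasDerivAt_off_countable_of_le (fun u => X u i) _ ht.1 hS.countable ?_ ?_
    (hX.intervalIntegrable_deriv i ht)
  · exact ((continuous_apply i).comp_continuousOn hX.1).mono (Icc_subset_Icc_right ht.2)
  · rintro u ⟨hu, huS⟩
    exact (differentiableAt_pi.mp (hdiff u ⟨⟨hu.1, hu.2.le.trans ht.2⟩, huS⟩) i).hasDerivAt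

theorem sigAux_singleton (hX : PiecewiseC1 X a b) (i : Fin d) (ht : t ∈ Icc a b) :
    sigAux X a [i] t = X t i - X a i := by
  simp only [sigAux, one_mul]
  exact hX.integral_deriv_eq_sub i ht

theorem intervalIntegrable_mul_deriv (hX : PiecewiseC1 X a b) {g : ℝ → ℝ}
    (hg : ContinuousOn g (Icc a b)) (i : Fin d) (ht : t ∈ Icc a b) :
    IntervalIntegrable (fun u => g u * deriv (fun v => X v i) u) volume a t := by
  refine (hX.intervalIntegrable_deriv i ht).continuousOn_mul (hg.mono ?_)
  rw [uIcc_of_le ht.1]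
  exact Icc_subset_Icc_right ht.2

theorem continuousOn_sigAux (hX : PiecewiseC1 X a b) :
    ∀ l : List (Fin d), ContinuousOn (sigAux X a l) (Icc a b)
  | [] => continuousOn_const
  | i :: l => by
    have h := continuousOn_primitive_interval' (hX.intervalIntegrable_mul_deriv
      (hX.continuousOn_sigAux l) i ⟨hX.left_le_right, le_rfl⟩) left_mem_uIcc
    rwa [uIcc_of_le hX.left_le_right] at h

theorem eqOn_sigAux_append (hX : PiecewiseC1 X a b) {m₁ m₂ m₃ : List (Fin d)} {c : ℝ}
    (h : EqOn (sigAux X a m₁) (fun t => sigAux X a m₂ t - c * sigAux X a m₃ t) (Icc a b)) :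
    ∀ l : List (Fin d), EqOn (sigAux X a (l ++ m₁))
      (fun t => sigAux X a (l ++ m₂) t - c * sigAux X a (l ++ m₃) t) (Icc a b)
  | [] => h
  | i :: l => fun t ht => by
    have hint (m : List (Fin d)) :=
      hX.intervalIntegrable_mul_deriv (hX.continuousOn_sigAux m) i ht
    simp only [List.cons_append, sigAux]
    rw [← intervalIntegral.integral_const_mul,
      ← intervalIntegral.integral_sub (hint _) ((hint _).const_mul c)]
    refine integral_congr fun u hu => ?_
    rw [uIcc_of_le ht.1] at hu
    simp only [hX.eqOn_sigAux_append h l ⟨hu.1, hu.2.trans ht.2⟩]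
    ring

theorem eqOn_sigAux_pair_of_legendrian (hX : PiecewiseC1 X a b) {p q s : Fin d}
    (hLeg : ∀ t ∈ Icc a b, DifferentiableAt ℝ X t →
      deriv (fun u => X u p) t * X t s = deriv (fun u => X u q) t) :
    EqOn (sigAux X a [p, s]) (fun t => sigAux X a [q] t - X a s * sigAux X a [p] t)
      (Icc a b) := by
  intro t ht
  obtain ⟨S, hS, hdiff⟩ := hX.exists_finite_differentiableAt
  have hae : ∀ᵐ u, u ∈ uIoc a t → sigAux X a [s] u * deriv (fun v => X v p) u =
      deriv (fun v => X v q) u - X a s * deriv (fun v => X v p) u := by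
    filter_upwards [hS.countable.ae_notMem volume] with u huS hu
    rw [uIoc_of_le ht.1] at hu
    have hub : u ∈ Icc a b := ⟨hu.1.le, hu.2.trans ht.2⟩
    rw [hX.sigAux_singleton s hub, ← hLeg u hub (hdiff u ⟨⟨hu.1, hub.2⟩, huS⟩)]
    ring
  have hint (i : Fin d) := hX.intervalIntegrable_deriv i ht
  change ∫ u in a..t, sigAux X a [s] u * deriv (fun v => X v p) u =
    sigAux X a [q] t - X a s * sigAux X a [p] t
  rw [integral_congr_ae hae, intervalIntegral.integral_sub (hint q) ((hint p).const_mul _),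
    intervalIntegral.integral_const_mul, hX.integral_deriv_eq_sub q ht,
    hX.integral_deriv_eq_sub p ht, hX.sigAux_singleton q ht, hX.sigAux_singleton p ht]

end PiecewiseC1

theorem legendrian_projection_sig_relation_general {d : ℕ} {a b : ℝ}
    (X : ℝ → Fin d → ℝ) (hX : PiecewiseC1 X a b) (p q s : Fin d)
    (hLeg : ∀ t ∈ Set.Icc a b, DifferentiableAt ℝ X t →
      deriv (fun u => X u p) t * X t s = deriv (fun u => X u q) t) :
    ∀ w : List (Fin d),
      sig X a (s :: p :: w) b - sig X a (q :: w) b + X a s * sig X a (p :: w) b = 0 := by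
  intro w
  have key := hX.eqOn_sigAux_append (hX.eqOn_sigAux_pair_of_legendrian hLeg) w.reverse
    ⟨hX.left_le_right, le_rfl⟩
  simp only [sig, List.reverse_cons, List.append_assoc, List.singleton_append] at key ⊢
  rw [key]
  ring

/-- If the projection `t ↦ (X_p(t), X_q(t), X_s(t))` of a piecewise C¹ path
`X : [a,b] → ℝ^d` is Legendrian (`Ẋ_p · X_s = Ẋ_q` wherever differentiable), then
`⟨σ(X), sp·w⟩ − ⟨σ(X), q·w⟩ + X_s(a)·⟨σ(X), p·w⟩ = 0` for every word `w`. -/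
theorem legendrian_projection_sig_relation {d : ℕ} {a b : ℝ} (hab : a < b)
    (X : ℝ → Fin d → ℝ) (hX : PiecewiseC1 X a b) (p q s : Fin d)
    (hLeg : ∀ t ∈ Set.Icc a b, DifferentiableAt ℝ X t →
      deriv (fun u => X u p) t * X t s = deriv (fun u => X u q) t) :
    ∀ w : List (Fin d),
      sig X a (s :: p :: w) b - sig X a (q :: w) b + X a s * sig X a (p :: w) b = 0 :=
  legendrian_projection_sig_relation_general X hX p q s hLeg
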